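/- Let T be the template (231, 101). Then for every n ≥ 0, R_{n,T} equals the set of permutations of length n which avoid the pattern 132. -/

import Mathlib

/-- A *permutation word* of length `n`: a list that is a rearrangement of `1, 2, ..., n`
(where `n` is its length). -/
def IsPermWord (w : List ℕ) : Prop := w.Perm (List.range' 1 w.length)

/-- Two words are *order-isomorphic*: they have the same length and corresponding
entries compare in the same way. -/
def OrderIsoWord (u v : List ℕ) : Prop :=
  u.length = v.length ∧
    ∀ (i j : ℕ) (hi : i < u.length) (hj : j < u.length)
      (hi' : i < v.length) (hj' : j < v.length),
      (u[i]'hi < u[j]'hj ↔ v[i]'hi' < v[j]'hj')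

/-- `w` contains a copy of the pattern `σ`: some subsequence of `w` (given by increasing
indices) is order-isomorphic to `σ`. -/
def ContainsPattern (w σ : List ℕ) : Prop :=
  ∃ s : List ℕ, s.Sublist w ∧ OrderIsoWord s σ

/-- `w` avoids the pattern `σ`: it contains no copy of `σ`. -/
def AvoidsPattern (w σ : List ℕ) : Prop := ¬ ContainsPattern w σ

/-- Membership in the family of permutation-word sets `R_{n,T}` generated by the
template `T = (P, B)` (the length index `n` is just the length of the word).
`InR P B w` holds iff `w` is the empty word, a single-letter word, or the
concatenation of subwords `W_1, ..., W_t` (`t = |P|`, total length at least `2`) such that: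
whenever `p_i > p_j` every element of `W_i` exceeds every element of `W_j`;
each `W_i` is order-isomorphic to a permutation word `V_i` that again satisfies `InR`;
and whenever `b_i = 0` the subword `W_i` has exactly one element. -/
inductive InR (P : List ℕ) (B : List Bool) : List ℕ → Prop where
  | nil : InR P B []
  | single (x : ℕ) : InR P B [x]
  | join (Ws Vs : List (List ℕ)) (hlen : Ws.length = P.length)
      (hVs : Vs.length = Ws.length)
      (h2 : 2 ≤ Ws.flatten.length)
      (horder : ∀ (i j : ℕ) (hi : i < Ws.length) (hj : j < Ws.length),
          P[j]'(by omega) < P[i]'(by omega) →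
          ∀ x ∈ Ws[i]'hi, ∀ y ∈ Ws[j]'hj, y < x)
      (hiso : ∀ (i : ℕ) (hi : i < Ws.length),
          IsPermWord (Vs[i]'(by omega)) ∧ OrderIsoWord (Ws[i]'hi) (Vs[i]'(by omega)))
      (hrec : ∀ (i : ℕ) (hi : i < Vs.length), InR P B (Vs[i]'hi))
      (hzero : ∀ (i : ℕ) (hi : i < Ws.length) (hb : i < B.length),
          B[i]'hb = false → (Ws[i]'hi).length = 1) :
      InR P B Ws.flatten

/-- The set `R_{n,T}` of permutation words of length `n` generated by the template `T = (P,B)`. -/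
def Rset (P : List ℕ) (B : List Bool) (n : ℕ) : Set (List ℕ) :=
  {w | w.length = n ∧ IsPermWord w ∧ InR P B w}

namespace Aux
open List

lemma orderIso_symm {u v : List ℕ} (h : OrderIsoWord u v) : OrderIsoWord v u :=
  ⟨h.1.symm, fun i j hi hj hi' hj' => (h.2 i j hi' hj' hi hj).symm⟩

lemma short_avoids {w : List ℕ} (h : w.length < 3) : AvoidsPattern w [1,3,2] := by
  rintro ⟨s, hs, hlen, -⟩
  have := hs.length_le
  simp at hlen
  omega

/-- The sorted version of a list. -/
def srt (u : List ℕ) : List ℕ := u.mergeSort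

lemma srt_perm (u : List ℕ) : srt u ~ u := List.mergeSort_perm u _

lemma srt_sorted (u : List ℕ) : (srt u).Pairwise (· ≤ ·) := by
  have := List.pairwise_mergeSort (le := fun a b : ℕ => decide (a ≤ b))
    (fun a b c h1 h2 => by simp at *; omega) (fun a b => by simp; omega) u
  simpa [srt] using this

lemma srt_strict {u : List ℕ} (hu : u.Nodup) {i j : ℕ} (hij : i < j)
    (hj : j < (srt u).length) : (srt u)[i]'(by omega) < (srt u)[j]'hj := by
  have hnd : (srt u).Nodup := (srt_perm u).nodup_iff.mpr hu
  have hle := (srt_sorted u).rel_get_of_lt (a := ⟨i, by omega⟩) (b := ⟨j, hj⟩)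
    (by simpa using hij)
  simp only [List.get_eq_getElem] at hle
  have hne : (srt u)[i]'(by omega) ≠ (srt u)[j]'hj := by
    intro h
    exact absurd ((hnd.getElem_inj_iff).mp h) (by omega)
  omega

lemma srt_indexOf_lt_iff {u : List ℕ} (hu : u.Nodup) {a b : ℕ}
    (ha : a ∈ srt u) (hb : b ∈ srt u) :
    a < b ↔ (srt u).idxOf a < (srt u).idxOf b := by
  set s := srt u with hs
  have hia : s.idxOf a < s.length := List.idxOf_lt_length_iff.mpr ha
  have hib : s.idxOf b < s.length := List.idxOf_lt_length_iff.mpr hb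
  have hga : s[s.idxOf a]'hia = a := List.getElem_idxOf hia
  have hgb : s[s.idxOf b]'hib = b := List.getElem_idxOf hib
  constructor
  · intro hab
    rcases lt_trichotomy (s.idxOf a) (s.idxOf b) with h | h | h
    · exact h
    · exact absurd ((List.idxOf_inj ha).mp h) (by omega)
    · have := srt_strict hu h hia
      rw [hga, hgb] at this; omega
  · intro h
    have := srt_strict hu h hib
    rw [hga, hgb] at this; exact this

/-- Standardization of a word. -/
def std (u : List ℕ) : List ℕ := u.map (fun x => (srt u).idxOf x + 1)

@[simp] lemma std_length (u : List ℕ) : (std u).length = u.length := by simp [std]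

lemma std_isPermWord {u : List ℕ} (hu : u.Nodup) : IsPermWord (std u) := by
  have hnd : (srt u).Nodup := (srt_perm u).nodup_iff.mpr hu
  have h1 : std u ~ (srt u).map (fun x => (srt u).idxOf x + 1) :=
    ((srt_perm u).map _).symm
  have h2 : (srt u).map (fun x => (srt u).idxOf x + 1) = List.range' 1 u.length := by
    apply List.ext_getElem
    · simp [(srt_perm u).length_eq]
    · intro i h1' h2'
      simp only [List.getElem_map, List.getElem_range']
      rw [hnd.idxOf_getElem]
      omega
  unfold IsPermWord
  rw [std_length]
  rw [h2] at h1
  exact h1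

lemma std_orderIso {u : List ℕ} (hu : u.Nodup) : OrderIsoWord u (std u) := by
  refine ⟨(std_length u).symm, fun i j hi hj hi' hj' => ?_⟩
  have hmi : u[i]'hi ∈ srt u := (srt_perm u).mem_iff.mpr (List.getElem_mem hi)
  have hmj : u[j]'hj ∈ srt u := (srt_perm u).mem_iff.mpr (List.getElem_mem hj)
  simp only [std, List.getElem_map]
  rw [srt_indexOf_lt_iff hu hmi hmj]
  omega

end Aux

namespace Aux
open List

lemma contains_of_orderIso {u v σ : List ℕ} (h : OrderIsoWord u v)
    (hc : ContainsPattern v σ) : ContainsPattern u σ := by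
  obtain ⟨s, hs, hsiso⟩ := hc
  obtain ⟨f, hf⟩ := List.sublist_iff_exists_fin_orderEmbedding_get_eq.mp hs
  have hl : u.length = v.length := h.1
  refine ⟨(List.finRange s.length).map (fun ix => u.get ((f ix).cast hl.symm)), ?_, ?_, ?_⟩
  · apply List.sublist_iff_exists_fin_orderEmbedding_get_eq.mpr
    have hlen : ((List.finRange s.length).map
        (fun ix => u.get ((f ix).cast hl.symm))).length = s.length := by simp
    refine ⟨OrderEmbedding.ofStrictMono
      (fun ix => (f (ix.cast hlen)).cast hl.symm) ?_, ?_⟩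
    · intro a b hab
      have h2 : a.cast hlen < b.cast hlen := by
        simpa only [Fin.lt_iff_val_lt_val, Fin.coe_cast] using hab
      simpa only [Fin.lt_iff_val_lt_val, Fin.coe_cast] using f.strictMono h2
    · intro ix
      simp only [OrderEmbedding.coe_ofStrictMono, List.get_eq_getElem, List.getElem_map,
        List.getElem_finRange, Fin.coe_cast]
      rfl
  · simpa using hsiso.1
  · intro i j hi hj hi' hj'
    have hi0 : i < s.length := by simpa using hi
    have hj0 : j < s.length := by simpa using hj
    have e1 : ∀ (k : ℕ) (hk : k < s.length),
        ((List.finRange s.length).map (fun ix => u.get ((f ix).cast hl.symm)))[k]'(by simpa using hk)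
          = u[(f ⟨k, hk⟩ : Fin v.length).val]'(by rw [hl]; exact (f ⟨k, hk⟩).isLt) := by
      intro k hk
      simp [List.get_eq_getElem]
    rw [e1 i hi0, e1 j hj0]
    rw [h.2 _ _ _ _ ((f ⟨i, hi0⟩).isLt) ((f ⟨j, hj0⟩).isLt)]
    have e2 : ∀ (k : ℕ) (hk : k < s.length),
        v[(f ⟨k, hk⟩ : Fin v.length).val]'((f ⟨k, hk⟩).isLt) = s[k]'hk := by
      intro k hk
      have := hf ⟨k, hk⟩
      simpa [List.get_eq_getElem] using this.symm
    rw [e2 i hi0, e2 j hj0]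
    exact hsiso.2 i j hi0 hj0 hi' hj'

lemma avoids_of_orderIso {u v σ : List ℕ} (h : OrderIsoWord u v)
    (hv : AvoidsPattern v σ) : AvoidsPattern u σ :=
  fun hc => hv (contains_of_orderIso (orderIso_symm h) hc)

lemma avoids_sublist {u w σ : List ℕ} (h : u <+ w) (hw : AvoidsPattern w σ) :
    AvoidsPattern u σ := fun ⟨s, hs, hi⟩ => hw ⟨s, hs.trans h, hi⟩

lemma permWord_nodup {w : List ℕ} (h : IsPermWord w) : w.Nodup :=
  h.nodup_iff.mpr (List.nodup_range' (s := 1) (n := w.length))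

lemma permWord_le {w : List ℕ} (h : IsPermWord w) {x : ℕ} (hx : x ∈ w) :
    1 ≤ x ∧ x ≤ w.length := by
  have := h.mem_iff.mp hx
  rw [List.mem_range'_1] at this
  omega

lemma permWord_mem_len {w : List ℕ} (h : IsPermWord w) (hw : 1 ≤ w.length) :
    w.length ∈ w := by
  rw [h.mem_iff, List.mem_range'_1]
  omega

lemma isPermWord_singleton (x : ℕ) : IsPermWord [x] ↔ x = 1 := by
  simp [IsPermWord, List.range']

end Aux

namespace Aux
open List

lemma inR_avoids : ∀ n (w : List ℕ), w.length ≤ n →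
    InR [2,3,1] [true,false,true] w → AvoidsPattern w [1,3,2] := by
  intro n
  induction n with
  | zero =>
    intro w hw _
    exact short_avoids (by omega)
  | succ n IH =>
    intro w hw h
    cases h with
    | nil => exact short_avoids (by simp)
    | single x => exact short_avoids (by simp)
    | join Ws Vs hlen hVs h2 horder hiso hrec hzero =>
      obtain ⟨W1, W2, W3, rfl⟩ := List.length_eq_three.mp (by simpa using hlen)
      obtain ⟨V1, V2, V3, rfl⟩ := List.length_eq_three.mp (by simpa using hVs)
      have hW2 : W2.length = 1 := hzero 1 (by simp) (by simp) (by simp)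
      obtain ⟨m, rfl⟩ := List.length_eq_one_iff.mp hW2
      -- block order facts
      have h13 : ∀ x ∈ W1, ∀ y ∈ W3, y < x := by
        have h := horder 0 2 (by simp) (by simp) (show (1:ℕ) < 2 by norm_num)
        simpa using h
      have h21 : ∀ y ∈ W1, y < m := by
        have h := horder 1 0 (by simp) (by simp) (show (2:ℕ) < 3 by norm_num)
        simp only [List.getElem_cons_succ, List.getElem_cons_zero] at h
        intro y hy
        exact h m (by simp) y hy
      have h23 : ∀ y ∈ W3, y < m := by
        have h := horder 1 2 (by simp) (by simp) (show (1:ℕ) < 3 by norm_num)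
        simp only [List.getElem_cons_succ, List.getElem_cons_zero] at h
        intro y hy
        exact h m (by simp) y hy
      -- length bounds
      have hwlen : W1.length + W3.length + 1 ≤ n + 1 := by
        have h' := hw
        simp only [List.flatten_cons, List.flatten_nil, List.length_append,
          List.length_cons, List.length_nil] at h'
        omega
      -- each block avoids
      have hA : AvoidsPattern W1 [1,3,2] := by
        obtain ⟨hpV, hisoV⟩ := hiso 0 (by simp)
        have hrecV := hrec 0 (by simp)
        simp only [List.getElem_cons_zero] at hpV hisoV hrecV
        have hlV : V1.length = W1.length := hisoV.1.symm
        exact avoids_of_orderIso hisoV (IH V1 (by omega) hrecV)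
      have hC : AvoidsPattern W3 [1,3,2] := by
        obtain ⟨hpV, hisoV⟩ := hiso 2 (by simp)
        have hrecV := hrec 2 (by simp)
        simp only [List.getElem_cons_succ, List.getElem_cons_zero] at hpV hisoV hrecV
        have hlV : V3.length = W3.length := hisoV.1.symm
        exact avoids_of_orderIso hisoV (IH V3 (by omega) hrecV)
      -- main argument
      rintro ⟨s, hs, hsiso⟩
      have hs3 : s.length = 3 := by simpa using hsiso.1
      obtain ⟨a, b, c, rfl⟩ := List.length_eq_three.mp hs3
      have hab : a < b := by
        have h := hsiso.2 0 1 (by simp) (by simp) (by simp) (by simp)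
        simpa using h
      have hac : a < c := by
        have h := hsiso.2 0 2 (by simp) (by simp) (by simp) (by simp)
        simpa using h
      have hcb : c < b := by
        have h := hsiso.2 2 1 (by simp) (by simp) (by simp) (by simp)
        simpa using h
      have hs' : [a,b,c] <+ W1 ++ ([m] ++ (W3 ++ [])) := by simpa using hs
      rw [List.sublist_append_iff] at hs'
      obtain ⟨l1, l2, heq, hsub1, hsub2⟩ := hs'
      rw [List.sublist_append_iff] at hsub2
      obtain ⟨l3, l4, heq2, hsub3, hsub4⟩ := hsub2
      have hsub4' : l4 <+ W3 := by simpa using hsub4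
      have hl3 : l3.length ≤ 1 := by simpa using hsub3.length_le
      have hl3m : ∀ x ∈ l3, x = m := by
        intro x hx
        simpa using hsub3.subset hx
      subst heq2
      rcases l1 with _ | ⟨x1, _ | ⟨x2, _ | ⟨x3, t1⟩⟩⟩
      · -- l1 = []
        rcases l3 with _ | ⟨y, l3⟩
        · -- everything in W3
          simp only [List.nil_append] at heq
          exact hC ⟨[a,b,c], heq ▸ hsub4', hsiso⟩
        · have hy : y = m := hl3m y (by simp)
          have : l3 = [] := by
            rcases l3 with _ | ⟨z, l3⟩
            · rfl
            · simp at hl3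
          subst this
          simp only [List.nil_append, List.cons_append, List.cons.injEq] at heq
          obtain ⟨rfl, hbc⟩ := heq
          have hbm : b ∈ W3 := by
            have : [b, c] = l4 := by simpa using hbc
            exact hsub4'.subset (this ▸ (by simp))
          have := h23 b hbm
          omega
      · -- l1 = [x1]
        simp only [List.cons_append, List.nil_append, List.cons.injEq] at heq
        obtain ⟨rfl, hbc⟩ := heq
        have haW1 : a ∈ W1 := hsub1.subset (by simp)
        rcases l3 with _ | ⟨y, l3⟩
        · -- [b,c] in W3
          have hbm : b ∈ W3 := by
            have : [b, c] = l4 := by simpa using hbc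
            exact hsub4'.subset (this ▸ (by simp))
          have := h13 a haW1 b hbm
          omega
        · have hy : y = m := hl3m y (by simp)
          have : l3 = [] := by
            rcases l3 with _ | ⟨z, l3⟩
            · rfl
            · simp at hl3
          subst this
          simp only [List.cons_append, List.nil_append, List.cons.injEq] at hbc
          obtain ⟨rfl, hc⟩ := hbc
          have hcm : c ∈ W3 := by
            have : [c] = l4 := by simpa using hc
            exact hsub4'.subset (this ▸ (by simp))
          have := h13 a haW1 c hcm
          omega
      · -- l1 = [x1, x2]
        simp only [List.cons_append, List.nil_append, List.cons.injEq] at heq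
        obtain ⟨rfl, rfl, hc⟩ := heq
        have haW1 : a ∈ W1 := hsub1.subset (by simp)
        have hbW1 : b ∈ W1 := hsub1.subset (by simp)
        rcases l3 with _ | ⟨y, l3⟩
        · have hcm : c ∈ W3 := by
            have : [c] = l4 := by simpa using hc
            exact hsub4'.subset (this ▸ (by simp))
          have := h13 a haW1 c hcm
          omega
        · have hy : y = m := hl3m y (by simp)
          simp only [List.cons_append, List.cons.injEq] at hc
          obtain ⟨rfl, -⟩ := hc
          have := h21 b hbW1
          omega
      · -- l1 has length ≥ 3
        simp only [List.cons_append, List.nil_append, List.cons.injEq] at heq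
        obtain ⟨rfl, rfl, rfl, ht⟩ := heq
        have ht1 : t1 = [] := by
          rcases t1 with _ | ⟨z, t1⟩
          · rfl
          · exfalso
            have := congrArg List.length ht
            simp at this
        subst ht1
        exact hA ⟨[a,b,c], hsub1, hsiso⟩

end Aux

namespace Aux
open List

lemma avoids_inR : ∀ n (w : List ℕ), w.length ≤ n → IsPermWord w →
    AvoidsPattern w [1,3,2] → InR [2,3,1] [true,false,true] w := by
  intro n
  induction n with
  | zero =>
    intro w hw _ _
    obtain rfl : w = [] := List.length_eq_zero_iff.mp (by omega)
    exact InR.nil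
  | succ n IH =>
    intro w hw hperm havoid
    by_cases h0 : w.length = 0
    · obtain rfl : w = [] := List.length_eq_zero_iff.mp h0
      exact InR.nil
    by_cases h1 : w.length = 1
    · obtain ⟨x, rfl⟩ := List.length_eq_one_iff.mp h1; exact InR.single x
    set N := w.length with hN
    have hmem : N ∈ w := permWord_mem_len hperm (by omega)
    obtain ⟨A, C, hw2⟩ := List.append_of_mem hmem
    have hlen : N = A.length + C.length + 1 := by
      have := congrArg List.length hw2
      simp at this
      omega
    have hnd : (A ++ N :: C).Nodup := by
      have := permWord_nodup hperm
      rwa [hw2] at this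
    rw [List.nodup_append] at hnd
    obtain ⟨hndA, hndNC, hdisj⟩ := hnd
    have hNnotinC : N ∉ C := (List.nodup_cons.mp hndNC).1
    have hndC : C.Nodup := (List.nodup_cons.mp hndNC).2
    have hNnotinA : N ∉ A := fun h => hdisj N h N (by simp) rfl
    have hub : ∀ x ∈ w, x ≤ N := fun x hx => (permWord_le hperm hx).2
    have key : ∀ a ∈ A, ∀ c ∈ C, c < a := by
      intro a ha c hc
      by_contra hcon
      push_neg at hcon
      have hane : a ≠ c := fun h => hdisj a ha a (by simp [h, hc]) rfl
      have hac : a < c := lt_of_le_of_ne hcon hane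
      have haw : a ∈ w := by rw [hw2]; simp [ha]
      have hcw : c ∈ w := by rw [hw2]; simp [hc]
      have haN : a ≠ N := fun h => hNnotinA (h ▸ ha)
      have hcN : c ≠ N := fun h => hNnotinC (h ▸ hc)
      have haN' : a < N := lt_of_le_of_ne (hub a haw) haN
      have hcN' : c < N := lt_of_le_of_ne (hub c hcw) hcN
      refine havoid ⟨[a, N, c], ?_, ?_, ?_⟩
      · rw [hw2]
        exact (List.singleton_sublist.mpr ha).append
          ((List.singleton_sublist.mpr hc).cons₂ N)
      · rfl
      · intro i j hi hj hi' hj'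
        simp only [List.length_cons, List.length_nil] at hi hj
        interval_cases i <;> interval_cases j <;> simp <;> omega
    have hsubA : A <+ w := by rw [hw2]; exact List.sublist_append_left A (N :: C)
    have hsubC : C <+ w := by
      rw [hw2]
      exact (List.sublist_cons_self N C).trans (List.sublist_append_right A (N :: C))
    have havA : AvoidsPattern A [1,3,2] := avoids_sublist hsubA havoid
    have havC : AvoidsPattern C [1,3,2] := avoids_sublist hsubC havoid
    have hstdA : InR [2,3,1] [true,false,true] (std A) :=
      IH (std A) (by simp; omega) (std_isPermWord hndA)
        (avoids_of_orderIso (orderIso_symm (std_orderIso hndA)) havA)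
    have hstdC : InR [2,3,1] [true,false,true] (std C) :=
      IH (std C) (by simp; omega) (std_isPermWord hndC)
        (avoids_of_orderIso (orderIso_symm (std_orderIso hndC)) havC)
    have hfl : w = ([A, [N], C] : List (List ℕ)).flatten := by simp [hw2]
    rw [hfl]
    refine InR.join [A, [N], C] [std A, [1], std C] (by simp) (by simp) ?_ ?_ ?_ ?_ ?_
    · simp; omega
    · intro i j hi hj hPij x hx y hy
      simp only [List.length_cons, List.length_nil] at hi hj
      interval_cases i <;> interval_cases j <;>
        simp only [List.getElem_cons_zero, List.getElem_cons_succ,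
          List.mem_singleton] at hPij hx hy ⊢
      · omega
      · omega
      · exact key x hx y hy
      · subst hx
        exact lt_of_le_of_ne (hub y (hsubA.subset hy)) (fun h => hNnotinA (h ▸ hy))
      · omega
      · subst hx
        exact lt_of_le_of_ne (hub y (hsubC.subset hy)) (fun h => hNnotinC (h ▸ hy))
      · omega
      · omega
      · omega
    · intro i hi
      simp only [List.length_cons, List.length_nil] at hi
      interval_cases i
      · exact ⟨std_isPermWord hndA, std_orderIso hndA⟩
      · refine ⟨(isPermWord_singleton 1).mpr rfl, rfl, ?_⟩
        intro i j hi hj hi' hj'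
        have hi1 : i < 1 := hi
        have hj1 : j < 1 := hj
        interval_cases i <;> interval_cases j <;>
          simp only [List.getElem_cons_zero, List.getElem_cons_succ] <;> omega
      · exact ⟨std_isPermWord hndC, std_orderIso hndC⟩
    · intro i hi
      simp only [List.length_cons, List.length_nil] at hi
      interval_cases i
      · exact hstdA
      · exact InR.single 1
      · exact hstdC
    · intro i hi hb hfalse
      simp only [List.length_cons, List.length_nil] at hi
      interval_cases i
      · simp at hfalse
      · simp
      · simp at hfalse

end Aux


/-- Let `T` be the template `(231, 101)`.  Then for every `n ≥ 0`,
`R_{n,T}` equals the set of permutations of length `n` which avoid the pattern `132`. -/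
theorem template_231_eq_avoid132 (n : ℕ) :
    Rset [2, 3, 1] [true, false, true] n =
      {w : List ℕ | w.length = n ∧ IsPermWord w ∧ AvoidsPattern w [1, 3, 2]} := by
  ext w
  simp only [Rset, Set.mem_setOf_eq]
  constructor
  · rintro ⟨hlen, hperm, hin⟩
    exact ⟨hlen, hperm, Aux.inR_avoids w.length w le_rfl hin⟩
  · rintro ⟨hlen, hperm, hav⟩
    exact ⟨hlen, hperm, Aux.avoids_inR w.length w le_rfl hperm hav⟩
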